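/- arXiv:2301.06613 — 5 statements merged into one kernel-verified Lean document; each statement's English description precedes it below -/
import Mathlib

section
/- If a finite simple oriented graph Θ contains no simple cycle, then the Hecke–Kiselman monoid HK_Θ is finite; in particular its growth function f_Θ is bounded (the Gelfand–Kirillov dimension of its monoid algebra is 0). -/
open Relation

section Defs

variable {V : Type*}

/-- Simplicity of an oriented graph: no loops and at most one direction between two vertices. -/
def SimpleOriented (E : V → V → Prop) : Prop := ∀ x y, E x y → ¬ E y x

/-- A simple cycle: pairwise distinct vertices `x₁ → x₂ → ⋯ → x_N → x₁` with `N ≥ 3`. -/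
def IsSimpleCycle (E : V → V → Prop) (c : List V) : Prop :=
  3 ≤ c.length ∧ c.Nodup ∧ c.Chain' E ∧ ∀ h : c ≠ [], E (c.getLast h) (c.head h)

def IsCycleVertex (E : V → V → Prop) (x : V) : Prop := ∃ c, IsSimpleCycle E c ∧ x ∈ c

/-- Two distinct simple cycles connected by an oriented path of length ≥ 0. -/
def TwoCyclesConnected (E : V → V → Prop) : Prop :=
  ∃ c c' : List V, IsSimpleCycle E c ∧ IsSimpleCycle E c' ∧ ¬ c.IsRotated c' ∧
    ∃ a ∈ c, ∃ b ∈ c', Relation.ReflTransGen E a b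

/-- Defining relations of the Hecke–Kiselman monoid. -/
def hkRel (E : V → V → Prop) : FreeMonoid V → FreeMonoid V → Prop := fun a b =>
  (∃ x : V, a = .of x * .of x ∧ b = .of x) ∨
  (∃ x y : V, x ≠ y ∧ ¬ E x y ∧ ¬ E y x ∧ a = .of x * .of y ∧ b = .of y * .of x) ∨
  (∃ x y : V, E x y ∧ a = .of x * .of y * .of x ∧ b = .of x * .of y) ∨
  (∃ x y : V, E x y ∧ a = .of y * .of x * .of y ∧ b = .of x * .of y)

/-- The Hecke–Kiselman monoid of the graph. -/
def HKmonoid (E : V → V → Prop) : Type _ := (conGen (hkRel E)).Quotient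

instance (E : V → V → Prop) : Monoid (HKmonoid E) :=
  inferInstanceAs (Monoid (conGen (hkRel E)).Quotient)

/-- Canonical projection from the free monoid. -/
def hkProj (E : V → V → Prop) : FreeMonoid V →* HKmonoid E := (conGen (hkRel E)).mk'

/-- Image in `HKmonoid E` of a word over `V`. -/
def hkWord (E : V → V → Prop) (w : List V) : HKmonoid E := hkProj E (FreeMonoid.ofList w)

/-- Growth function: number of elements represented by words of length at most `n`. -/
noncomputable def hkGrowth (E : V → V → Prop) (n : ℕ) : ℕ :=
  (hkWord E '' {w : List V | w.length ≤ n}).ncard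

/-- `w ↛ t` -/
def NArrowTo (E : V → V → Prop) (w : List V) (t : V) : Prop :=
  t ∉ w ∧ ∀ x ∈ w, ¬ E x t

/-- `t ↛ w` -/
def NArrowFrom (E : V → V → Prop) (t : V) (w : List V) : Prop :=
  t ∉ w ∧ ∀ y ∈ w, ¬ E t y

/-- `t ↮ w` -/
def NConn (E : V → V → Prop) (t : V) (w : List V) : Prop :=
  NArrowTo E w t ∧ NArrowFrom E t w

/-- A word is reduced if it contains no factor of the forms (i), (ii), (iii). -/
def Reduced (E : V → V → Prop) (lt : V → V → Prop) (w : List V) : Prop :=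
  (¬ ∃ (p u q : List V) (t : V), w = p ++ [t] ++ u ++ [t] ++ q ∧ NArrowTo E u t) ∧
  (¬ ∃ (p u q : List V) (t : V), w = p ++ [t] ++ u ++ [t] ++ q ∧ NArrowFrom E t u) ∧
  (¬ ∃ (p u q : List V) (t₁ t₂ : V), w = p ++ [t₁] ++ u ++ [t₂] ++ q ∧ lt t₂ t₁ ∧
      NConn E t₂ ([t₁] ++ u))

/-- `m`-th power of a word. -/
def wpow (w : List V) (m : ℕ) : List V := (List.replicate m w).flatten

open Classical in
/-- The number `k_x` of paths ending at (resp. beginning at) `x`. -/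
noncomputable def kx (E : V → V → Prop) (x : V) : ℕ :=
  if ∃ a, IsCycleVertex E a ∧ Relation.ReflTransGen E x a then
    {p : List V | p ≠ [] ∧ p.Chain' E ∧ p.getLast? = some x}.ncard
  else
    {p : List V | p ≠ [] ∧ p.Chain' E ∧ p.head? = some x}.ncard

open Classical in
/-- The invariant `s(Θ) = Σ_j (Σ_{x ∈ 𝒜_j} k_x + 1)` with respect to an enumeration of
the simple cycles; `𝒜_j` is the set of (non-cycle) vertices connected by an edge with `C_j`. -/
noncomputable def sTheta [Fintype V] (E : V → V → Prop) {k : ℕ} (cycles : Fin k → List V) : ℕ :=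
  ∑ j : Fin k,
    ((∑ x ∈ Finset.univ.filter
        (fun x => ¬ IsCycleVertex E x ∧ ∃ a ∈ cycles j, E x a ∨ E a x), kx E x) + 1)

end Defs

/-!
Without cycles, `E` is well-founded on the finite vertex set, so every nonempty set `S` of
vertices has a source `s`: no edge of `S` enters `s`. In `HK_Θ` one then has `s u s = s u` for
every word `u` over `S`, by pushing the second `s` leftwards: it commutes with letters not joined
to `s` and is absorbed by `s a s = s a` when `s → a`. Hence every word over `S` collapses to a
word over `S \ {s}` or to `p s q` with `p`, `q` over `S \ {s}`, and by induction on `S` only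
finitely many elements are represented.
-/

namespace List

variable {α : Type*}

theorem exists_eq_append_cons_append_cons_of_not_nodup {l : List α} (h : ¬ l.Nodup) :
    ∃ y p m q, l = p ++ y :: m ++ y :: q := by
  obtain ⟨y, hy⟩ := exists_duplicate_iff_not_nodup.mpr h
  obtain ⟨r₁, r₂, rfl, hy₁, hy₂⟩ := cons_sublist_iff.mp (duplicate_iff_sublist.mp hy)
  obtain ⟨p, m, rfl⟩ := append_of_mem hy₁
  obtain ⟨m', q, rfl⟩ := append_of_mem (singleton_sublist.mp hy₂)
  exact ⟨y, p, m ++ m', q, by simp⟩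

end List

section Acyclic

variable {V : Type*} {E : V → V → Prop}

/-- Cut the closed walk at a repeated vertex until none is left; closed walks of length one or
two are excluded by simplicity. -/
theorem exists_isSimpleCycle_of_isChain (hsimple : SimpleOriented E) {x : V} {l : List V}
    (h : (x :: l ++ [x]).IsChain E) : ∃ c, IsSimpleCycle E c := by
  induction hn : l.length using Nat.strong_induction_on generalizing x l with
  | _ n ih =>
    by_cases hnd : (x :: l).Nodup
    · refine ⟨x :: l, ?_, hnd, h.left_of_append, fun hne =>
        h.rel_getLast_head_of_append hne (List.cons_ne_nil _ _)⟩
      match l, h with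
      | [], h => exact absurd (List.isChain_pair.mp h) (hsimple x x (List.isChain_pair.mp h))
      | [y], h =>
        simp only [List.cons_append, List.nil_append, List.isChain_cons_cons,
          List.isChain_singleton, and_true] at h
        exact absurd h.2 (hsimple x y h.1)
      | _ :: _ :: _, _ => simp
    · obtain ⟨y, p, m, q, hpq⟩ := List.exists_eq_append_cons_append_cons_of_not_nodup hnd
      have hlen := congrArg List.length hpq
      simp only [List.length_cons, List.length_append] at hlen
      refine ih m.length (by omega) (x := y) (h.infix ⟨p, q ++ [x], ?_⟩) rfl
      rw [hpq]
      simp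

theorem not_transGen_self (hsimple : SimpleOriented E) (hnocycle : ¬ ∃ c, IsSimpleCycle E c)
    (x : V) : ¬ TransGen E x x := by
  intro hx
  obtain ⟨b, hxb, hbx⟩ := TransGen.tail'_iff.mp hx
  obtain ⟨l, hl, hlast⟩ := List.exists_isChain_cons_of_relationReflTransGen hxb
  refine hnocycle (exists_isSimpleCycle_of_isChain hsimple (hl.append (.singleton x) ?_))
  simp [List.getLast?_eq_some_getLast, hlast, hbx]

theorem wellFounded_of_forall_not_isSimpleCycle [Finite V] (hsimple : SimpleOriented E)
    (hnocycle : ¬ ∃ c, IsSimpleCycle E c) : WellFounded E :=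
  have : Std.Irrefl (TransGen E) := ⟨not_transGen_self hsimple hnocycle⟩
  Subrelation.wf TransGen.single (Finite.wellFounded_of_trans_of_irrefl (TransGen E))

end Acyclic

section Monoid

variable {V : Type*} {E : V → V → Prop}

theorem hkWord_append (u v : List V) : hkWord E (u ++ v) = hkWord E u * hkWord E v :=
  map_mul (hkProj E) _ _

theorem hkWord_nil : hkWord E [] = 1 :=
  map_one (hkProj E)

theorem hkWord_cons (a : V) (w : List V) : hkWord E (a :: w) = hkWord E [a] * hkWord E w :=
  hkWord_append [a] w

theorem hkWord_surjective : Function.Surjective (hkWord E) := fun x => by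
  obtain ⟨a, rfl⟩ := Con.mk'_surjective x
  exact ⟨FreeMonoid.toList a, congrArg (hkProj E) (FreeMonoid.ofList_toList a)⟩

theorem hkProj_eq_of_hkRel {a b : FreeMonoid V} (h : hkRel E a b) : hkProj E a = hkProj E b :=
  (Con.eq _).mpr (ConGen.Rel.of a b h)

theorem hkWord_mul_self (x : V) : hkWord E [x] * hkWord E [x] = hkWord E [x] := by
  simp only [hkWord, ← map_mul]
  exact hkProj_eq_of_hkRel (Or.inl ⟨x, rfl, rfl⟩)

theorem hkWord_mul_comm {x y : V} (hxy : x ≠ y) (h₁ : ¬ E x y) (h₂ : ¬ E y x) :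
    hkWord E [x] * hkWord E [y] = hkWord E [y] * hkWord E [x] := by
  simp only [hkWord, ← map_mul]
  exact hkProj_eq_of_hkRel (Or.inr (Or.inl ⟨x, y, hxy, h₁, h₂, rfl, rfl⟩))

theorem hkWord_mul_mul_self_of_rel {x y : V} (h : E x y) :
    hkWord E [x] * hkWord E [y] * hkWord E [x] = hkWord E [x] * hkWord E [y] := by
  simp only [hkWord, ← map_mul]
  exact hkProj_eq_of_hkRel (Or.inr (Or.inr (Or.inl ⟨x, y, h, rfl, rfl⟩)))

theorem hkWord_mul_mul_self_of_forall_not_rel {s : V} {u : List V} (hu : ∀ a ∈ u, ¬ E a s) :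
    hkWord E [s] * hkWord E u * hkWord E [s] = hkWord E [s] * hkWord E u := by
  induction u with
  | nil => rw [hkWord_nil, mul_one, hkWord_mul_self]
  | cons a u ih =>
    have ih := ih fun b hb => hu b (List.mem_cons_of_mem a hb)
    set S := hkWord E [s]
    set A := hkWord E [a]
    set U := hkWord E u
    rw [hkWord_cons]
    by_cases has : a = s
    · subst has
      rw [← mul_assoc, hkWord_mul_self, ih]
    by_cases hsa : E s a
    · have hSAS : S * A * S = S * A := hkWord_mul_mul_self_of_rel hsa
      calc S * (A * U) * S = S * A * S * (U * S) := by rw [hSAS]; simp only [mul_assoc]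
        _ = S * A * (S * U * S) := by simp only [mul_assoc]
        _ = S * (A * U) := by rw [ih, ← mul_assoc, hSAS, mul_assoc]
    · have hcomm : S * A = A * S := hkWord_mul_comm (Ne.symm has) hsa (hu a List.mem_cons_self)
      calc S * (A * U) * S = A * (S * U * S) := by rw [← mul_assoc, hcomm]; simp only [mul_assoc]
        _ = S * (A * U) := by rw [ih, ← mul_assoc, ← mul_assoc, hcomm]

end Monoid

section Finiteness

open scoped Pointwise

variable {V : Type*} {E : V → V → Prop}

variable (E) in
def hkWordsOver (S : Finset V) : Set (HKmonoid E) := hkWord E '' {w | ∀ x ∈ w, x ∈ S}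

theorem hkWordsOver_subset_of_forall_not_rel [DecidableEq V] {S : Finset V} {s : V}
    (hs : ∀ a ∈ S, ¬ E a s) :
    hkWordsOver E S ⊆ hkWordsOver E (S.erase s) ∪
      hkWordsOver E (S.erase s) * {hkWord E [s]} * hkWordsOver E (S.erase s) := by
  rintro _ ⟨w, hw, rfl⟩
  induction w with
  | nil => exact Or.inl ⟨[], by simp, rfl⟩
  | cons a w ih =>
    have haS : a ∈ S := hw a List.mem_cons_self
    rw [hkWord_cons a w]
    rcases ih fun x hx => hw x (List.mem_cons_of_mem a hx) with
      ⟨v, hv, hvw⟩ | ⟨_, ⟨_, ⟨p, hp, rfl⟩, _, rfl, rfl⟩, _, ⟨q, hq, rfl⟩, hpq⟩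
    · by_cases has : a = s
      · subst has
        refine Or.inr ⟨_, Set.mul_mem_mul ⟨[], by simp, rfl⟩ rfl, _, ⟨v, hv, rfl⟩, ?_⟩
        rw [← hvw, hkWord_nil, one_mul]
      · refine Or.inl ⟨a :: v, ?_, by rw [hkWord_cons, hvw]⟩
        simpa [has, haS] using hv
    · beta_reduce at hpq
      rw [← hpq]
      by_cases has : a = s
      · subst has
        have hp' : ∀ b ∈ p, ¬ E b a := fun b hb => hs b (Finset.mem_of_mem_erase (hp b hb))
        refine Or.inr ⟨_, Set.mul_mem_mul ⟨[], by simp, rfl⟩ rfl, _, ⟨p ++ q, ?_, rfl⟩, ?_⟩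
        · simpa using fun b hb => (List.mem_append.mp hb).elim (hp b) (hq b)
        · rw [hkWord_nil, one_mul, hkWord_append, ← mul_assoc, ← mul_assoc,
            hkWord_mul_mul_self_of_forall_not_rel hp', mul_assoc]
      · refine Or.inr ⟨_, Set.mul_mem_mul ⟨a :: p, ?_, rfl⟩ rfl, _, ⟨q, hq, rfl⟩, ?_⟩
        · simpa [has, haS] using hp
        · rw [hkWord_cons]; simp only [mul_assoc]

theorem finite_hkWordsOver (hE : WellFounded E) (S : Finset V) : (hkWordsOver E S).Finite := by
  classical
  induction S using Finset.strongInduction with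
  | H S ih =>
    rcases S.eq_empty_or_nonempty with rfl | hne
    · refine (Set.finite_singleton (hkWord E [])).subset ?_
      rintro _ ⟨w, hw, rfl⟩
      obtain rfl : w = [] :=
        List.eq_nil_iff_forall_not_mem.mpr fun x hx => by simpa using hw x hx
      rfl
    · obtain ⟨s, hsS, hs⟩ := hE.has_min (S : Set V) hne
      have hT := ih _ (Finset.erase_ssubset hsS)
      exact (hT.union ((hT.mul (Set.finite_singleton _)).mul hT)).subset
        (hkWordsOver_subset_of_forall_not_rel hs)

theorem hkGrowth_le_natCard [Finite (HKmonoid E)] (n : ℕ) :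
    hkGrowth E n ≤ Nat.card (HKmonoid E) :=
  Set.ncard_le_card _

end Finiteness

/-- If a finite simple oriented graph contains no simple cycle, then the
Hecke–Kiselman monoid `HK_Θ` is finite; in particular its growth function is bounded. -/
theorem hk_finite_of_no_cycle
    {V : Type*} [Fintype V] (E : V → V → Prop)
    (hsimple : SimpleOriented E)
    (hnocycle : ¬ ∃ c, IsSimpleCycle E c) :
    Finite (HKmonoid E) ∧ ∃ B : ℕ, ∀ n : ℕ, hkGrowth E n ≤ B := by
  have hfin : (hkWordsOver E Finset.univ).Finite :=
    finite_hkWordsOver (wellFounded_of_forall_not_isSimpleCycle hsimple hnocycle) _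
  have hcover : hkWordsOver E Finset.univ = Set.univ :=
    Set.eq_univ_of_forall fun x => (hkWord_surjective x).imp fun w hw =>
      ⟨fun _ _ => Finset.mem_univ _, hw⟩
  have : Finite (HKmonoid E) := Set.finite_univ_iff.mp (hcover ▸ hfin)
  exact ⟨this, _, hkGrowth_le_natCard⟩
end

section
/- Let Θ be a finite simple oriented graph and fix any linear order on its vertex set V. Then the set of reduced words is a regular language over the alphabet V: there exists a deterministic finite automaton over V (with finitely many states) whose accepted language is exactly the set of reduced words. -/
open Relation

/-!
Each forbidden factor `t₁ u t₂` has the shape `a u b` with a condition `S a b` on its ends and a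
condition `I x b` on every letter `x` of `u`. Whether a word contains such a factor is decided by a
left-to-right scan remembering, for every letter `b`, whether the word read so far ends in `a u`
with `S a b` and `I x b` for `x ∈ u`; this is finitely much information, and it is updated letter
by letter. Reduced words form the intersection of the complements of three such languages.
-/

namespace Language

variable {α : Type*}

theorem isRegular_setOf_of_snoc {σ : Type*} [Finite σ] (f : List α → σ) (step : σ → α → σ)
    (hf : ∀ w a, f (w ++ [a]) = step (f w) a) (P : σ → Prop) :
    IsRegular {w : List α | P (f w)} := by
  let M : DFA α σ := ⟨step, f [], {s | P s}⟩
  have heval (w : List α) : M.eval w = f w := by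
    induction w using List.reverseRecOn with
    | nil => rfl
    | append_singleton w a ih => rw [DFA.eval_append_singleton, ih, hf]
  have := Fintype.ofFinite σ
  exact isRegular_iff.mpr ⟨σ, inferInstance, M, Set.ext fun w => by
    change M.eval w ∈ M.accept ↔ P (f w)
    rw [heval]; rfl⟩

end Language

namespace List

variable {α : Type*} (S I : α → α → Prop)

def HasGuardedFactor (w : List α) : Prop :=
  ∃ p u q a b, w = p ++ [a] ++ u ++ [b] ++ q ∧ S a b ∧ ∀ x ∈ u, I x b

/-- The automaton state: whether reading `b` next completes a guarded factor. -/
def HasGuardedSuffix (w : List α) (b : α) : Prop :=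
  ∃ p a u, w = p ++ [a] ++ u ∧ S a b ∧ ∀ x ∈ u, I x b

variable {S I}

theorem hasGuardedSuffix_append_singleton (w : List α) (c b : α) :
    HasGuardedSuffix S I (w ++ [c]) b ↔ S c b ∨ (HasGuardedSuffix S I w b ∧ I c b) := by
  constructor
  · rintro ⟨p, a, u, h, hS, hI⟩
    rcases u.eq_nil_or_concat' with rfl | ⟨u, d, rfl⟩
    · obtain ⟨-, hca⟩ := List.append_inj' (h.trans (List.append_nil _)) rfl
      rw [List.singleton_inj.mp hca]
      exact Or.inl hS
    · obtain ⟨hw, hcd⟩ := List.append_inj' (h.trans (List.append_assoc _ _ _).symm) rfl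
      rw [← List.singleton_inj.mp hcd] at hI
      simp only [List.mem_append, List.mem_singleton] at hI
      exact Or.inr ⟨⟨p, a, u, hw, hS, fun x hx => hI x (.inl hx)⟩, hI c (.inr rfl)⟩
  · rintro (hS | ⟨⟨p, a, u, rfl, hS, hI⟩, hc⟩)
    · exact ⟨w, c, [], by simp, hS, by simp⟩
    · exact ⟨p, a, u ++ [c], by simp, hS, by simpa [or_imp, forall_and, hc] using hI⟩

theorem hasGuardedFactor_append_singleton (w : List α) (c : α) :
    HasGuardedFactor S I (w ++ [c]) ↔ HasGuardedFactor S I w ∨ HasGuardedSuffix S I w c := by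
  constructor
  · rintro ⟨p, u, q, a, b, h, hS, hI⟩
    rcases q.eq_nil_or_concat' with rfl | ⟨q, d, rfl⟩
    · obtain ⟨hw, hcb⟩ := List.append_inj' (h.trans (List.append_nil _)) rfl
      rw [← List.singleton_inj.mp hcb] at hS hI
      exact Or.inr ⟨p, a, u, hw, hS, hI⟩
    · obtain ⟨hw, -⟩ := List.append_inj' (h.trans (List.append_assoc _ _ _).symm) rfl
      exact Or.inl ⟨p, u, q, a, b, hw, hS, hI⟩
  · rintro (⟨p, u, q, a, b, rfl, hS, hI⟩ | ⟨p, a, u, rfl, hS, hI⟩)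
    · exact ⟨p, u, q ++ [c], a, b, by simp, hS, hI⟩
    · exact ⟨p, u, [], a, c, by simp, hS, hI⟩

theorem isRegular_hasGuardedFactor [Finite α] (S I : α → α → Prop) :
    Language.IsRegular {w : List α | HasGuardedFactor S I w} :=
  Language.isRegular_setOf_of_snoc (fun w => (HasGuardedFactor S I w, HasGuardedSuffix S I w))
    (fun s c => (s.1 ∨ s.2 c, fun b => S c b ∨ (s.2 b ∧ I c b)))
    (fun w c => by
      ext b <;> simp only [hasGuardedFactor_append_singleton, hasGuardedSuffix_append_singleton])
    Prod.fst

end List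

section ReducedWords

variable {V : Type*} (E : V → V → Prop)

theorem nArrowTo_iff_forall {w : List V} {t : V} :
    NArrowTo E w t ↔ ∀ x ∈ w, x ≠ t ∧ ¬ E x t := by
  simp only [NArrowTo, forall_and]
  grind

theorem nArrowFrom_iff_forall {t : V} {w : List V} :
    NArrowFrom E t w ↔ ∀ y ∈ w, y ≠ t ∧ ¬ E t y := by
  simp only [NArrowFrom, forall_and]
  grind

theorem nConn_iff_forall {t : V} {w : List V} :
    NConn E t w ↔ ∀ x ∈ w, x ≠ t ∧ ¬ E x t ∧ ¬ E t x := by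
  simp only [NConn, nArrowTo_iff_forall, nArrowFrom_iff_forall, ← forall_and]
  grind

theorem setOf_reduced_eq (lt : V → V → Prop) :
    ({w | Reduced E lt w} : Language V) =
      {w | w.HasGuardedFactor (· = ·) (fun x t => x ≠ t ∧ ¬ E x t)}ᶜ ⊓
      ({w | w.HasGuardedFactor (· = ·) (fun y t => y ≠ t ∧ ¬ E t y)}ᶜ ⊓
      {w | w.HasGuardedFactor (fun t₁ t₂ => lt t₂ t₁ ∧ t₁ ≠ t₂ ∧ ¬ E t₁ t₂ ∧ ¬ E t₂ t₁)
        (fun x t => x ≠ t ∧ ¬ E x t ∧ ¬ E t x)}ᶜ) := by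
  ext w
  simp [Reduced, List.HasGuardedFactor, nArrowTo_iff_forall, nArrowFrom_iff_forall,
    nConn_iff_forall]

end ReducedWords

theorem reduced_words_regular_general
    {V : Type*} [Fintype V] [LinearOrder V] (E : V → V → Prop) :
    ∃ (σ : Type) (_ : Fintype σ) (M : DFA V σ),
      M.accepts = {w : List V | Reduced E (· < ·) w} := by
  change Language.IsRegular _
  rw [setOf_reduced_eq]
  exact (List.isRegular_hasGuardedFactor _ _).compl.inf
    ((List.isRegular_hasGuardedFactor _ _).compl.inf (List.isRegular_hasGuardedFactor _ _).compl)

/-- The set of reduced words is a regular language: it is the language accepted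
by a deterministic finite automaton (with finitely many states) over the alphabet `V`. -/
theorem reduced_words_regular
    {V : Type*} [Fintype V] [LinearOrder V] (E : V → V → Prop)
    (hsimple : SimpleOriented E) :
    ∃ (σ : Type) (_ : Fintype σ) (M : DFA V σ),
      M.accepts = {w : List V | Reduced E (· < ·) w} :=
  reduced_words_regular_general E
end

section
/- Let X be a finite alphabet, let L ⊆ X* be a regular language and let k ≥ 0 be an integer. Then there exists C > 0 such that the number of words in L of length at most n is at most C·(n+1)^k for all n ∈ ℕ if and only if L can be written as a finite union of languages of the form {v₀ w₁^{a₁} v₁ w₂^{a₂} v₂ ⋯ v_{s−1} w_s^{a_s} v_s : a₁, …, a_s ∈ ℕ}, where v₀, …, v_s, w₁, …, w_s ∈ X* are fixed words and 0 ≤ s ≤ k. -/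
open Relation

/-- The language `{v₀ w₁^{a₁} v₁ ⋯ w_s^{a_s} v_s : a₁,…,a_s ∈ ℕ}` determined by the fixed words
`v₀,…,v_s` and `w₁,…,w_s`. -/
def starLang {X : Type*} (s : ℕ) (vs : Fin (s + 1) → List X) (ws : Fin s → List X) :
    Set (List X) :=
  {u | ∃ a : Fin s → ℕ,
    u = vs 0 ++ (List.ofFn (fun i : Fin s => wpow (ws i) (a i) ++ vs i.succ)).flatten}

/-!
A star form `v c* F` in which `c` is not a prefix of any word of `F` is unambiguous: distinct
exponents give distinct words. An unambiguous star form of rank `s` therefore has at least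
`(m + 1)^s` words of length `O(m)`, while any star form of rank `s` has at most `(n + 1)^s` words
of length at most `n`; the latter gives the easy direction.

For the converse take a DFA for `L`. Polynomial growth rules out a useful state with two loops
beginning with different letters, since `u (d c*)ʲ d r` would be unambiguous star forms of every
rank inside `L`. Hence, within each strongly connected class it enters, the run of an accepted
word follows powers of the minimal loop at the entry state followed by a proper prefix of it,
and once it leaves the class it never returns. Cutting the word at these classes writes it as
an unambiguous star form whose language lies in `L` and whose fixed words are shorter than the
number of states. Its rank is at most `k` by the lower count, and there are only finitely many
such forms.
-/

theorem wpow_succ {X : Type*} (w : List X) (m : ℕ) : wpow w (m + 1) = w ++ wpow w m := by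
  simp [wpow, List.replicate_succ]

theorem length_wpow {X : Type*} (w : List X) (m : ℕ) : (wpow w m).length = m * w.length := by
  simp [wpow, List.length_flatten, List.sum_replicate]

theorem wpow_nil {X : Type*} (m : ℕ) : wpow ([] : List X) m = [] := by
  simp [wpow]

theorem wpow_append_inj {X : Type*} {c u u' : List X} (hc : c ≠ []) (hu : ¬ c <+: u)
    (hu' : ¬ c <+: u') : ∀ {a b : ℕ}, wpow c a ++ u = wpow c b ++ u' → a = b ∧ u = u'
  | 0, 0, h => ⟨rfl, h⟩
  | 0, b + 1, h =>
    absurd ⟨wpow c b ++ u', by rw [← List.append_assoc, ← wpow_succ, ← h]; rfl⟩ hu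
  | a + 1, 0, h =>
    absurd ⟨wpow c a ++ u, by rw [← List.append_assoc, ← wpow_succ, h]; rfl⟩ hu'
  | a + 1, b + 1, h => by
    simp only [wpow_succ, List.append_assoc, List.append_cancel_left_eq] at h
    obtain ⟨rfl, rfl⟩ := wpow_append_inj hc hu hu' h
    exact ⟨rfl, rfl⟩

theorem starLang_zero {X : Type*} (vs : Fin 1 → List X) (ws : Fin 0 → List X) :
    starLang 0 vs ws = {vs 0} := by
  simp [starLang]

theorem starLang_succ {X : Type*} (s : ℕ) (vs : Fin (s + 2) → List X)
    (ws : Fin (s + 1) → List X) :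
    starLang (s + 1) vs ws = Set.image2 (fun a u => vs 0 ++ wpow (ws 0) a ++ u) Set.univ
      (starLang s (Fin.tail vs) (Fin.tail ws)) := by
  ext u
  simp only [starLang, Set.mem_image2, Set.mem_univ, Set.mem_ofPred_eq, true_and]
  constructor
  · rintro ⟨a, rfl⟩
    exact ⟨a 0, _, ⟨Fin.tail a, rfl⟩, by simp [List.ofFn_succ, Fin.tail]⟩
  · rintro ⟨a₀, _, ⟨a, rfl⟩, rfl⟩
    exact ⟨Fin.cons a₀ a, by simp [List.ofFn_succ, Fin.tail]⟩

theorem finite_sep_length_le {X : Type*} [Finite X] (S : Set (List X)) (n : ℕ) :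
    {w ∈ S | w.length ≤ n}.Finite :=
  (List.finite_length_le X n).subset fun _ hw => hw.2

theorem le_of_forall_pow_le_mul_pow {r k : ℕ} {D : ℝ}
    (h : ∀ m : ℕ, ((m : ℝ) + 1) ^ r ≤ D * ((m : ℝ) + 1) ^ k) : r ≤ k := by
  by_contra! hkr
  set x : ℝ := (⌈D⌉₊ : ℝ) + 1
  have hD : D < x := by linarith [Nat.le_ceil D]
  have hx : 1 ≤ x := by linarith [(Nat.cast_nonneg ⌈D⌉₊ : (0 : ℝ) ≤ ⌈D⌉₊)]
  exact lt_irrefl (D * x ^ k) <| calc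
    D * x ^ k < x * x ^ k := mul_lt_mul_of_pos_right hD (by positivity)
    _ = x ^ (k + 1) := by ring
    _ ≤ x ^ r := pow_le_pow_right₀ hx hkr
    _ ≤ D * x ^ k := h ⌈D⌉₊

def HasPolyGrowth {X : Type*} (L : Set (List X)) (k : ℕ) : Prop :=
  ∃ C : ℝ, 0 < C ∧
    ∀ n : ℕ, (({w ∈ L | w.length ≤ n}).ncard : ℝ) ≤ C * ((n : ℝ) + 1) ^ k

inductive StarForm (X : Type*)
  | word (v : List X)
  | pump (v c : List X) (F : StarForm X)

namespace StarForm

variable {X : Type*}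

def lang : StarForm X → Set (List X)
  | word v => {v}
  | pump v c F => Set.image2 (fun a u => v ++ wpow c a ++ u) Set.univ F.lang

def rank : StarForm X → ℕ
  | word _ => 0
  | pump _ _ F => F.rank + 1

def head : StarForm X → List X
  | word v => v
  | pump v _ _ => v

def size : StarForm X → ℕ
  | word v => v.length
  | pump v c F => v.length + c.length + F.size

def prepend (u : List X) : StarForm X → StarForm X
  | word v => word (u ++ v)
  | pump v c F => pump (u ++ v) c F

def Unambiguous : StarForm X → Prop
  | word _ => True
  | pump _ c F => c ≠ [] ∧ (∀ u ∈ F.lang, ¬ c <+: u) ∧ F.Unambiguous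

def Bounded (B : ℕ) : StarForm X → Prop
  | word v => v.length ≤ B
  | pump v c F => v.length ≤ B ∧ c.length ≤ B ∧ F.Bounded B

def ofData : (s : ℕ) → (Fin (s + 1) → List X) → (Fin s → List X) → StarForm X
  | 0, vs, _ => word (vs 0)
  | s + 1, vs, ws => pump (vs 0) (ws 0) (ofData s (Fin.tail vs) (Fin.tail ws))

def toData : StarForm X → Σ s : ℕ, (Fin (s + 1) → List X) × (Fin s → List X)
  | word v => ⟨0, fun _ => v, Fin.elim0⟩
  | pump v c F => ⟨F.toData.1 + 1, Fin.cons v F.toData.2.1, Fin.cons c F.toData.2.2⟩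

theorem lang_prepend (u : List X) (F : StarForm X) : (F.prepend u).lang = (u ++ ·) '' F.lang := by
  cases F <;> simp [prepend, lang, Set.image_image2, List.append_assoc]

@[simp] theorem rank_prepend (u : List X) (F : StarForm X) : (F.prepend u).rank = F.rank := by
  cases F <;> rfl

@[simp] theorem head_prepend (u : List X) (F : StarForm X) : (F.prepend u).head = u ++ F.head := by
  cases F <;> rfl

@[simp] theorem unambiguous_prepend (u : List X) (F : StarForm X) :
    (F.prepend u).Unambiguous ↔ F.Unambiguous := by
  cases F <;> rfl

theorem Bounded.prepend {B : ℕ} {F : StarForm X} (hF : F.Bounded B) {u : List X}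
    (hu : (u ++ F.head).length ≤ B) : (F.prepend u).Bounded B := by
  cases F with
  | word v => exact hu
  | pump v c F => exact ⟨hu, hF.2⟩

theorem lang_ofData (s : ℕ) (vs : Fin (s + 1) → List X) (ws : Fin s → List X) :
    (ofData s vs ws).lang = starLang s vs ws := by
  induction s with
  | zero => simp [ofData, lang, starLang_zero]
  | succ s ih => simp [ofData, lang, starLang_succ, ih]

theorem rank_ofData (s : ℕ) (vs : Fin (s + 1) → List X) (ws : Fin s → List X) :
    (ofData s vs ws).rank = s := by
  induction s with
  | zero => rfl
  | succ s ih => simp [ofData, rank, ih]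

theorem starLang_toData (F : StarForm X) :
    starLang F.toData.1 F.toData.2.1 F.toData.2.2 = F.lang := by
  induction F with
  | word v => simp [toData, lang, starLang_zero]
  | pump v c F ih => simp [toData, lang, starLang_succ, ih]

theorem toData_fst (F : StarForm X) : F.toData.1 = F.rank := by
  induction F with
  | word v => rfl
  | pump v c F ih => simp [toData, rank, ih]

theorem ncard_lang_le [Finite X] (F : StarForm X) (n : ℕ) :
    {w ∈ F.lang | w.length ≤ n}.ncard ≤ (n + 1) ^ F.rank := by
  induction F with
  | word v =>
    simpa [lang, rank] using Set.ncard_le_ncard (Set.sep_subset {v} _) (Set.finite_singleton v)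
  | pump v c F ih =>
    set S := {u ∈ F.lang | u.length ≤ n}
    have hsub : {w ∈ (pump v c F).lang | w.length ≤ n} ⊆
        (fun p : ℕ × List X => v ++ wpow c p.1 ++ p.2) '' (Set.Iic n ×ˢ S) := by
      rintro _ ⟨⟨a, -, u, hu, rfl⟩, hlen⟩
      simp only [List.length_append, length_wpow] at hlen
      have hu : u ∈ S := ⟨hu, by omega⟩
      -- an empty `c` can be pumped any number of times, so take exponent `0` then
      by_cases hc : c = []
      · exact ⟨(0, u), ⟨Nat.zero_le n, hu⟩, by simp [hc, wpow_nil]⟩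
      · have : a ≤ a * c.length := Nat.le_mul_of_pos_right a (List.length_pos_iff.mpr hc)
        exact ⟨(a, u), ⟨Set.mem_Iic.mpr (by omega), hu⟩, rfl⟩
    have hfin : (Set.Iic n ×ˢ S).Finite := (Set.finite_Iic n).prod (finite_sep_length_le _ n)
    calc {w ∈ (pump v c F).lang | w.length ≤ n}.ncard
        ≤ (Set.Iic n ×ˢ S).ncard :=
          (Set.ncard_le_ncard hsub (hfin.image _)).trans (Set.ncard_image_le hfin)
      _ ≤ (n + 1) ^ (F.rank + 1) := by
          rw [Set.ncard_prod, Set.ncard_Iic_nat, pow_succ, mul_comm]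
          exact Nat.mul_le_mul_right _ ih

theorem pow_rank_le_ncard_lang [Finite X] {F : StarForm X} (hF : F.Unambiguous) (m : ℕ) :
    (m + 1) ^ F.rank ≤ {w ∈ F.lang | w.length ≤ F.size * (m + 1)}.ncard := by
  induction F with
  | word v =>
    refine (Set.ncard_singleton v).ge.trans (Set.ncard_le_ncard ?_ (finite_sep_length_le _ _))
    simpa [lang, size] using Nat.le_mul_of_pos_right _ (Nat.succ_pos m)
  | pump v c F ih =>
    obtain ⟨hc, hpre, hF⟩ := hF
    set S := {u ∈ F.lang | u.length ≤ F.size * (m + 1)}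
    have hmaps : ∀ p ∈ Set.Iic m ×ˢ S, v ++ wpow c p.1 ++ p.2 ∈
        {w ∈ (pump v c F).lang | w.length ≤ (pump v c F).size * (m + 1)} := by
      rintro ⟨a, u⟩ ⟨ha, hu, hlen⟩
      refine ⟨⟨a, trivial, u, hu, rfl⟩, ?_⟩
      have : a * c.length ≤ m * c.length := Nat.mul_le_mul_right _ ha
      simp only [size, List.length_append, length_wpow]
      nlinarith
    have hinj : Set.InjOn (fun p : ℕ × List X => v ++ wpow c p.1 ++ p.2) (Set.Iic m ×ˢ S) := by
      rintro ⟨a, u⟩ ⟨-, hu, -⟩ ⟨b, u'⟩ ⟨-, hu', -⟩ h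
      simp only [List.append_assoc, List.append_cancel_left_eq] at h
      obtain ⟨rfl, rfl⟩ := wpow_append_inj hc (hpre u hu) (hpre u' hu') h
      rfl
    calc (m + 1) ^ (F.rank + 1) ≤ (Set.Iic m ×ˢ S).ncard := by
          rw [Set.ncard_prod, Set.ncard_Iic_nat, pow_succ, mul_comm]
          exact Nat.mul_le_mul_left _ (ih hF)
      _ ≤ _ := Set.ncard_le_ncard_of_injOn _ hmaps hinj (finite_sep_length_le _ _)

theorem finite_setOf_rank_le_bounded [Finite X] (B k : ℕ) :
    {F : StarForm X | F.rank ≤ k ∧ F.Bounded B}.Finite := by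
  have hW := List.finite_length_le X B
  induction k with
  | zero =>
    refine (hW.image word).subset ?_
    rintro (v | ⟨v, c, F⟩) ⟨hk, hB⟩
    · exact ⟨v, hB, rfl⟩
    · simp [rank] at hk
  | succ k ih =>
    refine ((hW.image word).union
      ((hW.prod (hW.prod ih)).image fun p => pump p.1 p.2.1 p.2.2)).subset ?_
    rintro (v | ⟨v, c, F⟩) ⟨hk, hB⟩
    · exact Or.inl ⟨v, hB, rfl⟩
    · exact Or.inr ⟨(v, c, F), ⟨hB.1, hB.2.1, Nat.le_of_succ_le_succ hk, hB.2.2⟩, rfl⟩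

theorem rank_le_of_hasPolyGrowth [Finite X] {L : Set (List X)} {k : ℕ}
    (hL : HasPolyGrowth L k) {F : StarForm X} (hF : F.Unambiguous) (hFL : F.lang ⊆ L) :
    F.rank ≤ k := by
  obtain ⟨C, hC0, hC⟩ := hL
  refine le_of_forall_pow_le_mul_pow (D := C * ((F.size : ℝ) + 1) ^ k) fun m => ?_
  set N := F.size * (m + 1)
  have hcount : (m + 1) ^ F.rank ≤ {w ∈ L | w.length ≤ N}.ncard :=
    (pow_rank_le_ncard_lang hF m).trans <| Set.ncard_le_ncard
      (fun w hw => ⟨hFL hw.1, hw.2⟩) (finite_sep_length_le _ _)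
  have hN : (N : ℝ) + 1 ≤ ((F.size : ℝ) + 1) * ((m : ℝ) + 1) := by
    simp only [N]; push_cast; nlinarith [(Nat.cast_nonneg F.size : (0 : ℝ) ≤ F.size)]
  calc ((m : ℝ) + 1) ^ F.rank ≤ {w ∈ L | w.length ≤ N}.ncard := by exact_mod_cast hcount
    _ ≤ C * ((N : ℝ) + 1) ^ k := hC N
    _ ≤ C * (((F.size : ℝ) + 1) * ((m : ℝ) + 1)) ^ k :=
        mul_le_mul_of_nonneg_left (pow_le_pow_left₀ (by positivity) hN k) hC0.le
    _ = C * ((F.size : ℝ) + 1) ^ k * ((m : ℝ) + 1) ^ k := by rw [mul_pow, mul_assoc]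

def alternating (c d r : List X) : ℕ → StarForm X
  | 0 => word (d ++ r)
  | j + 1 => pump d c (alternating c d r j)

theorem rank_alternating (c d r : List X) (j : ℕ) : (alternating c d r j).rank = j := by
  induction j with
  | zero => rfl
  | succ j ih => simp [alternating, rank, ih]

theorem prefix_of_mem_lang_alternating (c d r : List X) :
    ∀ j, ∀ u ∈ (alternating c d r j).lang, d <+: u
  | 0, _, rfl => List.prefix_append d r
  | _ + 1, _, ⟨_, _, _, _, rfl⟩ => List.prefix_append_of_prefix (List.prefix_append _ _)

theorem unambiguous_alternating {c d : List X} (hc : c ≠ []) (hcd : ∀ u, ¬ c <+: d ++ u)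
    (r : List X) (j : ℕ) : (alternating c d r j).Unambiguous := by
  induction j with
  | zero => trivial
  | succ j ih =>
    refine ⟨hc, fun u hu hcu => ?_, ih⟩
    obtain ⟨t, rfl⟩ := prefix_of_mem_lang_alternating c d r j u hu
    exact hcd t hcu

end StarForm

def IsStarFormUnion {X : Type*} (L : Set (List X)) (k : ℕ) : Prop :=
  ∃ T : Finset (StarForm X), (∀ F ∈ T, F.rank ≤ k) ∧ L = ⋃ F ∈ T, F.lang

theorem IsStarFormUnion.hasPolyGrowth {X : Type*} [Finite X] {L : Set (List X)} {k : ℕ}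
    (h : IsStarFormUnion L k) : HasPolyGrowth L k := by
  obtain ⟨T, hT, rfl⟩ := h
  refine ⟨T.card + 1, by positivity, fun n => ?_⟩
  have hsep :
      {w ∈ ⋃ F ∈ T, F.lang | w.length ≤ n} = ⋃ F ∈ T, {w ∈ F.lang | w.length ≤ n} := by
    ext w; simp only [Set.mem_ofPred_eq, Set.mem_iUnion]; tauto
  have hcount : {w ∈ ⋃ F ∈ T, F.lang | w.length ≤ n}.ncard ≤ T.card * (n + 1) ^ k := by
    rw [hsep]
    refine (T.set_ncard_biUnion_le _).trans ?_
    rw [← smul_eq_mul, ← Finset.sum_const]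
    exact Finset.sum_le_sum fun F hF =>
      (F.ncard_lang_le n).trans (Nat.pow_le_pow_right n.succ_pos (hT F hF))
  calc ({w ∈ ⋃ F ∈ T, F.lang | w.length ≤ n}.ncard : ℝ)
        ≤ T.card * ((n : ℝ) + 1) ^ k := by exact_mod_cast hcount
    _ ≤ (T.card + 1) * ((n : ℝ) + 1) ^ k := by gcongr; linarith

theorem isStarFormUnion_iff {X : Type*} (L : Set (List X)) (k : ℕ) :
    IsStarFormUnion L k ↔
      ∃ (m : ℕ) (data : Fin m → Σ s : ℕ, (Fin (s + 1) → List X) × (Fin s → List X)),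
        (∀ i, (data i).1 ≤ k) ∧ L = ⋃ i, starLang (data i).1 (data i).2.1 (data i).2.2 := by
  classical
  constructor
  · rintro ⟨T, hT, rfl⟩
    refine ⟨T.card, fun i => (T.equivFin.symm i).1.toData, fun i => ?_, ?_⟩
    · rw [StarForm.toData_fst]; exact hT _ (T.equivFin.symm i).2
    · simp only [StarForm.starLang_toData]
      ext w
      simp only [Set.mem_iUnion]
      exact ⟨fun ⟨F, hF, hw⟩ => ⟨T.equivFin ⟨F, hF⟩, by simpa using hw⟩,
        fun ⟨i, hw⟩ => ⟨_, (T.equivFin.symm i).2, hw⟩⟩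
  · rintro ⟨m, data, hk, rfl⟩
    refine ⟨Finset.univ.image fun i => StarForm.ofData (data i).1 (data i).2.1 (data i).2.2,
      ?_, ?_⟩
    · simpa [StarForm.rank_ofData] using hk
    · simp [StarForm.lang_ofData]

namespace DFA

variable {X σ : Type*} (M : DFA X σ)

def trace (q : σ) : List X → List σ
  | [] => [q]
  | x :: w => q :: trace (M.step q x) w

def Reaches (p r : σ) : Prop := ∃ y, M.evalFrom p y = r

def Unbranched (p : σ) : Prop :=
  ∀ x y, M.Reaches (M.step p x) p → M.Reaches (M.step p y) p → x = y

variable {M}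

theorem Reaches.refl (p : σ) : M.Reaches p p := ⟨[], rfl⟩

theorem Reaches.trans {p r s : σ} (h : M.Reaches p r) (h' : M.Reaches r s) : M.Reaches p s := by
  obtain ⟨y, rfl⟩ := h
  obtain ⟨z, rfl⟩ := h'
  exact ⟨y ++ z, M.evalFrom_of_append _ _ _⟩

theorem reaches_evalFrom (p : σ) (y : List X) : M.Reaches p (M.evalFrom p y) := ⟨y, rfl⟩

theorem evalFrom_wpow {q : σ} {c : List X} (h : M.evalFrom q c = q) (a : ℕ) :
    M.evalFrom q (wpow c a) = q := by
  induction a with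
  | zero => rfl
  | succ a ih => rw [wpow_succ, evalFrom_of_append, h, ih]

theorem self_mem_trace (q : σ) (w : List X) : q ∈ M.trace q w := by
  cases w <;> simp [trace]

theorem length_trace (q : σ) (w : List X) : (M.trace q w).length = w.length + 1 := by
  induction w generalizing q with
  | nil => rfl
  | cons x w ih => simp [trace, ih]

theorem trace_append_cons (q : σ) (u : List X) (x : X) (w : List X) :
    M.trace q (u ++ x :: w) = M.trace q u ++ M.trace (M.step (M.evalFrom q u) x) w := by
  induction u generalizing q with
  | nil => rfl
  | cons a u ih => simp [trace, ih, evalFrom_cons]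

theorem mem_trace_append_of_mem {q r : σ} {u w : List X} (h : r ∈ M.trace (M.evalFrom q u) w) :
    r ∈ M.trace q (u ++ w) := by
  induction u generalizing q with
  | nil => exact h
  | cons a u ih => exact List.mem_cons_of_mem _ (ih h)

theorem exists_prefix_of_mem_trace {q r : σ} {w : List X} (h : r ∈ M.trace q w) :
    ∃ w₁, w₁ <+: w ∧ M.evalFrom q w₁ = r := by
  induction w generalizing q with
  | nil => exact ⟨[], List.nil_prefix, (List.mem_singleton.mp h).symm⟩
  | cons x w ih =>
    rcases List.mem_cons.mp h with rfl | h
    · exact ⟨[], List.nil_prefix, rfl⟩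
    · obtain ⟨w₁, hw₁, rfl⟩ := ih h
      exact ⟨x :: w₁, List.cons_prefix_cons.mpr ⟨rfl, hw₁⟩, rfl⟩

theorem reaches_of_mem_trace {q r : σ} {w : List X} (h : r ∈ M.trace q w) : M.Reaches q r := by
  obtain ⟨w₁, -, rfl⟩ := exists_prefix_of_mem_trace h
  exact reaches_evalFrom q w₁

theorem length_lt_card_of_nodup_trace [Fintype σ] {q : σ} {w : List X}
    (h : (M.trace q w).Nodup) : w.length < Fintype.card σ := by
  simpa [length_trace] using h.length_le_card

theorem prefix_or_prefix_of_forall_reaches {q : σ}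
    (hnb : ∀ p, M.Reaches q p → M.Reaches p q → M.Unbranched p) :
    ∀ {p : σ} (y z : List X), M.Reaches q p → (∀ r ∈ M.trace p y, M.Reaches r q) →
      (∀ r ∈ M.trace p z, M.Reaches r q) → y <+: z ∨ z <+: y
  | _, [], _, _, _, _ => Or.inl List.nil_prefix
  | _, _ :: _, [], _, _, _ => Or.inr List.nil_prefix
  | p, a :: y, b :: z, hqp, hy, hz => by
    simp only [trace, List.forall_mem_cons] at hy hz
    obtain rfl : a = b := hnb p hqp hy.1 a b
      ((hy.2 _ (self_mem_trace _ _)).trans hqp) ((hz.2 _ (self_mem_trace _ _)).trans hqp)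
    simpa only [List.cons_prefix_cons, true_and] using
      prefix_or_prefix_of_forall_reaches hnb y z (hqp.trans (reaches_evalFrom p [a])) hy.2 hz.2

theorem exists_eq_wpow_append_of_forall_reaches {q : σ}
    (hnb : ∀ p, M.Reaches q p → M.Reaches p q → M.Unbranched p) {c : List X} (hc : c ≠ [])
    (hcq : M.evalFrom q c = q) (y : List X) (hy : ∀ r ∈ M.trace q y, M.Reaches r q) :
    ∃ a y' d, y = wpow c a ++ y' ∧ y' ++ d = c ∧ d ≠ [] := by
  have hcr : ∀ r ∈ M.trace q c, M.Reaches r q := by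
    intro r hr
    obtain ⟨c₁, ⟨c₂, rfl⟩, rfl⟩ := exists_prefix_of_mem_trace hr
    exact ⟨c₂, by rw [← evalFrom_of_append, hcq]⟩
  rcases prefix_or_prefix_of_forall_reaches hnb y c (Reaches.refl q) hy hcr with
    ⟨d, hd⟩ | ⟨y₂, rfl⟩
  · by_cases hd0 : d = []
    · exact ⟨1, [], c, by simp [← hd, hd0, wpow], by simp, hc⟩
    · exact ⟨0, y, d, rfl, hd, hd0⟩
  · have hy₂ : ∀ r ∈ M.trace q y₂, M.Reaches r q := fun r hr =>
      hy r (mem_trace_append_of_mem (by rwa [hcq]))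
    have : y₂.length < (c ++ y₂).length := by
      simpa using List.length_pos_iff.mpr hc
    obtain ⟨a, y', d, rfl, hyd, hd⟩ :=
      exists_eq_wpow_append_of_forall_reaches hnb hc hcq y₂ hy₂
    exact ⟨a + 1, y', d, by simp [wpow_succ], hyd, hd⟩
termination_by y.length

theorem exists_exit {q : σ} : ∀ {p : σ} (w : List X), M.Reaches p q →
    ∃ y rest, w = y ++ rest ∧ (∀ r ∈ M.trace p y, M.Reaches r q) ∧
      (rest = [] ∨ ∃ x w', rest = x :: w' ∧ ¬ M.Reaches (M.step (M.evalFrom p y) x) q)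
  | _, [], hp => ⟨[], [], rfl, by simpa [trace] using hp, Or.inl rfl⟩
  | p, a :: w, hp => by
    by_cases ha : M.Reaches (M.step p a) q
    · obtain ⟨y, rest, rfl, hy, hrest⟩ := exists_exit w ha
      exact ⟨a :: y, rest, rfl, by simpa [trace, hp] using hy,
        by simpa [evalFrom_cons] using hrest⟩
    · exact ⟨[], a :: w, rfl, by simpa [trace] using hp, Or.inr ⟨a, w, rfl, ha⟩⟩

theorem exists_minimal_loop {q : σ} (h : ∃ c, c ≠ [] ∧ M.evalFrom q c = q) :
    ∃ c, c ≠ [] ∧ M.evalFrom q c = q ∧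
      ∀ c', c' ≠ [] → M.evalFrom q c' = q → c.length ≤ c'.length := by
  classical
  have hn : ∃ n, ∃ c : List X, c ≠ [] ∧ M.evalFrom q c = q ∧ c.length = n := by
    obtain ⟨c, hc, hcq⟩ := h
    exact ⟨_, c, hc, hcq, rfl⟩
  obtain ⟨c, hc, hcq, hlen⟩ := Nat.find_spec hn
  exact ⟨c, hc, hcq, fun c' hc' hc'q => hlen ▸ Nat.find_min' hn ⟨c', hc', hc'q, rfl⟩⟩

theorem nodup_trace_of_minimal_loop {q : σ} {c : List X} (hcq : M.evalFrom q c = q)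
    (hmin : ∀ c', c' ≠ [] → M.evalFrom q c' = q → c.length ≤ c'.length) {y d : List X}
    (hyd : y ++ d = c) (hd : d ≠ []) : (M.trace q y).Nodup := by
  induction y using List.reverseRecOn generalizing d with
  | nil => exact List.nodup_singleton q
  | append_singleton y x ih =>
    rw [List.append_assoc, List.singleton_append] at hyd
    rw [← List.append_nil (y ++ [x]), List.append_assoc, List.singleton_append,
      trace_append_cons, List.nodup_append]
    refine ⟨ih hyd (List.cons_ne_nil x d), List.nodup_singleton _, ?_⟩
    -- a repeated state along `c` would cut out a shorter loop
    rintro r hr _ hr' rfl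
    obtain ⟨y₁, ⟨y₂, rfl⟩, hy₁⟩ := exists_prefix_of_mem_trace hr
    have hloop : M.evalFrom q (y₁ ++ d) = q := calc
      M.evalFrom q (y₁ ++ d) = M.evalFrom r d := by rw [evalFrom_of_append, hy₁]
      _ = M.evalFrom q (y₁ ++ y₂ ++ x :: d) := by
        rw [List.mem_singleton.mp hr', evalFrom_of_append _ _ _ (x :: d), evalFrom_cons]
      _ = q := by rw [hyd, hcq]
    have := hmin _ (by simp [hd]) hloop
    simp only [← hyd, List.length_append, List.length_cons] at this
    omega

theorem length_le_card_of_minimal_loop [Fintype σ] {q : σ} {c : List X} (hc : c ≠ [])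
    (hcq : M.evalFrom q c = q)
    (hmin : ∀ c', c' ≠ [] → M.evalFrom q c' = q → c.length ≤ c'.length) :
    c.length ≤ Fintype.card σ := by
  have := length_lt_card_of_nodup_trace
    (nodup_trace_of_minimal_loop hcq hmin (List.dropLast_append_getLast hc) (List.cons_ne_nil _ []))
  rw [List.length_dropLast] at this
  omega

theorem eq_nil_of_forall_reaches {q : σ} (hq : ¬ ∃ c, c ≠ [] ∧ M.evalFrom q c = q)
    {y : List X} (hy : ∀ r ∈ M.trace q y, M.Reaches r q) : y = [] := by
  rcases y with _ | ⟨x, y⟩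
  · rfl
  · obtain ⟨z, hz⟩ := hy _ (List.mem_cons_of_mem _ (self_mem_trace _ y))
    exact absurd ⟨x :: z, List.cons_ne_nil _ _, hz⟩ hq

theorem evalFrom_of_mem_lang_alternating {p : σ} {c d : List X} (hc : M.evalFrom p c = p)
    (hd : M.evalFrom p d = p) (r : List X) :
    ∀ j, ∀ u ∈ (StarForm.alternating c d r j).lang, M.evalFrom p u = M.evalFrom p r
  | 0, _, rfl => by rw [evalFrom_of_append, hd]
  | j + 1, _, ⟨a, _, u, hu, rfl⟩ => by
    rw [evalFrom_of_append, evalFrom_of_append, hd, evalFrom_wpow hc,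
      evalFrom_of_mem_lang_alternating hc hd r j u hu]

/-- Two loops at a useful state with different first letters would give unambiguous star forms
of every rank inside the language, namely `u (d c*)ʲ d r`. -/
theorem unbranched_of_hasPolyGrowth [Finite X] {k : ℕ} (hL : HasPolyGrowth M.accepts k) {p : σ}
    (hp : M.Reaches M.start p) (hacc : ∃ r, M.evalFrom p r ∈ M.accept) : M.Unbranched p := by
  rintro x y ⟨w₁, h₁⟩ ⟨w₂, h₂⟩
  by_contra hxy
  obtain ⟨u, rfl⟩ := hp
  obtain ⟨r, hr⟩ := hacc
  have hF := StarForm.rank_le_of_hasPolyGrowth hL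
    (F := (StarForm.alternating (x :: w₁) (y :: w₂) r (k + 1)).prepend u)
    ((StarForm.unambiguous_prepend _ _).mpr <| StarForm.unambiguous_alternating
      (List.cons_ne_nil _ _) (fun t h => hxy (List.cons_prefix_cons.mp h).1) r _)
    (by
      rw [StarForm.lang_prepend]
      rintro _ ⟨v, hv, rfl⟩
      show M.evalFrom M.start (u ++ v) ∈ M.accept
      rw [evalFrom_of_append,
        evalFrom_of_mem_lang_alternating h₁ h₂ r _ v hv]
      exact hr)
  simp [StarForm.rank_alternating] at hF

theorem not_prefix_of_mem_lang_prepend {q : σ} {y d u : List X} {x : X} {F : StarForm X}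
    (hx : ¬ M.Reaches (M.step (M.evalFrom q y) x) q) (hd : d ≠ [])
    (hdq : M.evalFrom q (y ++ d) = q) (hu : u ∈ (F.prepend (y ++ [x])).lang) :
    ¬ y ++ d <+: u := by
  rw [StarForm.lang_prepend] at hu
  obtain ⟨u, -, rfl⟩ := hu
  dsimp only
  rw [List.append_assoc, List.prefix_append_right_inj, List.singleton_append, List.prefix_cons_iff]
  rintro (rfl | ⟨d', rfl, -⟩)
  · exact hd rfl
  · exact hx ⟨d', by rwa [evalFrom_of_append, evalFrom_cons] at hdq⟩

variable [Fintype σ]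

variable (M) in
structure IsDecomposition (q : σ) (w : List X) (F : StarForm X) : Prop where
  mem_lang : w ∈ F.lang
  evalFrom_eq : ∀ u ∈ F.lang, M.evalFrom q u = M.evalFrom q w
  unambiguous : F.Unambiguous
  bounded : F.Bounded (Fintype.card σ)
  nodup_trace_head : (M.trace q F.head).Nodup

theorem isDecomposition_word {q : σ} {y : List X} (hy : (M.trace q y).Nodup) :
    M.IsDecomposition q y (.word y) where
  mem_lang := rfl
  evalFrom_eq := fun _ hu => by rw [hu]
  unambiguous := trivial
  bounded := (length_lt_card_of_nodup_trace hy).le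
  nodup_trace_head := hy

theorem IsDecomposition.prepend {q : σ} {y w : List X} {x : X} {F : StarForm X}
    (hF : M.IsDecomposition (M.step (M.evalFrom q y) x) w F) (hy : (M.trace q y).Nodup)
    (hyq : ∀ r ∈ M.trace q y, M.Reaches r q) (hx : ¬ M.Reaches (M.step (M.evalFrom q y) x) q) :
    M.IsDecomposition q (y ++ x :: w) (F.prepend (y ++ [x])) := by
  have hnodup : (M.trace q (y ++ x :: F.head)).Nodup := by
    rw [trace_append_cons, List.nodup_append]
    refine ⟨hy, hF.nodup_trace_head, fun r hr r' hr' hrr' => hx ?_⟩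
    exact (reaches_of_mem_trace hr').trans (hrr' ▸ hyq r hr)
  refine ⟨?_, ?_, ?_, ?_, ?_⟩
  · rw [StarForm.lang_prepend]
    exact ⟨w, hF.mem_lang, by simp⟩
  · rw [StarForm.lang_prepend]
    rintro _ ⟨u, hu, rfl⟩
    simp only [List.append_assoc, List.singleton_append, evalFrom_of_append, evalFrom_cons]
    exact hF.evalFrom_eq u hu
  · exact (StarForm.unambiguous_prepend _ _).mpr hF.unambiguous
  · refine hF.bounded.prepend (le_of_lt ?_)
    simpa using length_lt_card_of_nodup_trace hnodup
  · simpa using hnodup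

theorem IsDecomposition.pump {q : σ} {c w : List X} {T : StarForm X}
    (hT : M.IsDecomposition q w T) (hc : c ≠ []) (hcq : M.evalFrom q c = q)
    (hcard : c.length ≤ Fintype.card σ) (hTc : ∀ u ∈ T.lang, ¬ c <+: u) (a : ℕ) :
    M.IsDecomposition q (wpow c a ++ w) (.pump [] c T) where
  mem_lang := ⟨a, trivial, w, hT.mem_lang, rfl⟩
  evalFrom_eq := by
    rintro _ ⟨b, -, u, hu, rfl⟩
    simp only [List.nil_append, evalFrom_of_append, evalFrom_wpow hcq]
    exact hT.evalFrom_eq u hu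
  unambiguous := ⟨hc, hTc, hT.unambiguous⟩
  bounded := ⟨Nat.zero_le _, hcard, hT.bounded⟩
  nodup_trace_head := List.nodup_singleton q

/-- Split `w` where its run leaves the class of `q`. Inside the class the run follows powers of a
minimal loop at `q` and then a proper prefix of it; after leaving it never comes back, so the rest
is decomposed recursively and the loop cannot be pumped into it. -/
theorem exists_isDecomposition (w : List X) {q : σ}
    (hnb : ∀ p, M.Reaches q p → (∃ r, M.evalFrom p r ∈ M.accept) → M.Unbranched p)
    (hw : M.evalFrom q w ∈ M.accept) : ∃ F, M.IsDecomposition q w F := by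
  have hcls : ∀ p, M.Reaches q p → M.Reaches p q → M.Unbranched p :=
    fun p hqp ⟨y, hy⟩ => hnb p hqp ⟨y ++ w, by rwa [evalFrom_of_append, hy]⟩
  obtain ⟨y, rest, rfl, hy, hrest⟩ := exists_exit (M := M) w (Reaches.refl q)
  have htail : ∀ y', M.evalFrom q y' = M.evalFrom q y → (M.trace q y').Nodup →
      (∀ r ∈ M.trace q y', M.Reaches r q) → ∃ T, M.IsDecomposition q (y' ++ rest) T ∧
        ∀ d, d ≠ [] → M.evalFrom q (y' ++ d) = q → ∀ u ∈ T.lang, ¬ y' ++ d <+: u := by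
    intro y' hy'y hy'nd hy'q
    rcases hrest with rfl | ⟨x, w', rfl, hx⟩
    · refine ⟨_, isDecomposition_word (by simpa using hy'nd), fun d hd _ u hu hpre => hd ?_⟩
      simpa [show u = y' ++ [] from hu] using hpre.length_le
    · rw [← hy'y] at hx
      obtain ⟨F, hF⟩ := exists_isDecomposition w' (q := M.step (M.evalFrom q y') x)
        (fun p hp => hnb p ((reaches_evalFrom q (y' ++ [x])).trans (by simpa using hp)))
        (by simpa [evalFrom_of_append, hy'y] using hw)
      exact ⟨_, hF.prepend hy'nd hy'q hx, fun d hd hdq u hu =>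
        not_prefix_of_mem_lang_prepend hx hd hdq hu⟩
  by_cases hcyc : ∃ c, c ≠ [] ∧ M.evalFrom q c = q
  · obtain ⟨c, hc, hcq, hmin⟩ := exists_minimal_loop hcyc
    obtain ⟨a, y', d, rfl, rfl, hd⟩ := exists_eq_wpow_append_of_forall_reaches hcls hc hcq y hy
    obtain ⟨T, hT, hTc⟩ := htail y' (by rw [evalFrom_of_append, evalFrom_wpow hcq])
      (nodup_trace_of_minimal_loop hcq hmin rfl hd)
      (fun r hr => hy r (mem_trace_append_of_mem (by rwa [evalFrom_wpow hcq])))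
    rw [List.append_assoc]
    exact ⟨_, hT.pump hc hcq (length_le_card_of_minimal_loop hc hcq hmin) (hTc d hd hcq) a⟩
  · obtain rfl := eq_nil_of_forall_reaches hcyc hy
    obtain ⟨T, hT, -⟩ :=
      htail [] rfl (List.nodup_singleton q) (by simpa [trace] using Reaches.refl q)
    exact ⟨T, hT⟩
termination_by w.length

end DFA

theorem isStarFormUnion_of_hasPolyGrowth {X σ : Type*} [Finite X] [Fintype σ] (M : DFA X σ)
    {L : Set (List X)} (hML : M.accepts = L) {k : ℕ} (hL : HasPolyGrowth L k) :
    IsStarFormUnion L k := by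
  set T : Set (StarForm X) := {F | F.rank ≤ k ∧ F.Bounded (Fintype.card σ) ∧ F.lang ⊆ L}
  have hT : T.Finite :=
    (StarForm.finite_setOf_rank_le_bounded _ k).subset fun F hF => ⟨hF.1, hF.2.1⟩
  refine ⟨hT.toFinset, fun F hF => ((Set.Finite.mem_toFinset _).mp hF).1, ?_⟩
  refine subset_antisymm (fun w hw => ?_) ?_
  · have hmem : ∀ u, u ∈ L ↔ M.evalFrom M.start u ∈ M.accept := fun u => by
      rw [← hML]; rfl
    obtain ⟨F, hF⟩ := DFA.exists_isDecomposition w (q := M.start)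
      (fun p hp hacc => DFA.unbranched_of_hasPolyGrowth (hML ▸ hL) hp hacc) ((hmem w).mp hw)
    have hFL : F.lang ⊆ L := fun u hu => (hmem u).mpr (hF.evalFrom_eq u hu ▸ (hmem w).mp hw)
    exact Set.mem_biUnion ((Set.Finite.mem_toFinset _).mpr
      ⟨F.rank_le_of_hasPolyGrowth hL hF.unambiguous hFL, hF.bounded, hFL⟩) hF.mem_lang
  · simp only [Set.Finite.mem_toFinset, Set.iUnion_subset_iff]
    exact fun F hF => hF.2.2

/-- A regular language `L` over a finite alphabet has at most `C·(n+1)^k` words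
of length at most `n` (for some `C > 0`) if and only if `L` is a finite union of languages of
the form `{v₀ w₁^{a₁} v₁ ⋯ w_s^{a_s} v_s}` with `0 ≤ s ≤ k`. -/
theorem regular_language_poly_growth_iff_star_form
    {X : Type*} [Fintype X] (L : Set (List X))
    (hreg : ∃ (σ : Type) (_ : Fintype σ) (M : DFA X σ), M.accepts = L)
    (k : ℕ) :
    (∃ C : ℝ, 0 < C ∧ ∀ n : ℕ, (({w ∈ L | w.length ≤ n}).ncard : ℝ) ≤ C * ((n : ℝ) + 1) ^ k) ↔
    (∃ (m : ℕ) (data : Fin m → Σ s : ℕ, (Fin (s + 1) → List X) × (Fin s → List X)),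
      (∀ i, (data i).1 ≤ k) ∧
      L = ⋃ i, starLang (data i).1 (data i).2.1 (data i).2.2) := by
  obtain ⟨σ, _, M, hML⟩ := hreg
  rw [← isStarFormUnion_iff]
  exact ⟨isStarFormUnion_of_hasPolyGrowth M hML, IsStarFormUnion.hasPolyGrowth⟩
end

section
/- Let Θ be a finite simple oriented graph containing no two distinct simple cycles connected by an oriented path of length ≥ 0, and fix any linear order on its vertex set V. If w ∈ V* is a nonempty word such that w^m is reduced for every m ≥ 1, then every letter occurring in w is a cycle vertex of Θ. -/
open Relation

/-! If `w²` is reduced, every letter `t` of `w` has an in-neighbour and an out-neighbour among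
the letters of `w`: otherwise the factor of `w²` between an occurrence of `t` in the first copy
and the next occurrence of `t` is a forbidden factor of type (i) or (ii). Following out-neighbours
inside the finite set of letters, `t` reaches a closed walk; following in-neighbours, it is
reached from one. Both closed walks lie on simple cycles, which must coincide because one is
connected to the other through `t`. Going around that cycle closes a walk through `t`, so `t`
lies on a simple cycle. -/

namespace List

variable {α : Type*} {r : α → α → Prop}

theorem exists_eq_append_cons_notMem {a : α} :
    ∀ {l : List α}, a ∈ l → ∃ s t, l = s ++ a :: t ∧ a ∉ s
  | b :: l, h => by
    by_cases hba : b = a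
    · exact ⟨[], l, by rw [hba, nil_append], not_mem_nil⟩
    · obtain ⟨s, t, rfl, has⟩ := exists_eq_append_cons_notMem
        ((mem_cons.1 h).resolve_left (Ne.symm hba))
      exact ⟨b :: s, t, rfl, by simp [Ne.symm hba, has]⟩

theorem exists_nodup_isChain_cons_of_reflTransGen {a b : α} (h : ReflTransGen r a b) :
    ∃ l, IsChain r (a :: l) ∧ (a :: l).getLast (cons_ne_nil a l) = b ∧ (a :: l).Nodup := by
  induction h using ReflTransGen.head_induction_on with
  | refl => exact ⟨[], .singleton _, rfl, nodup_singleton _⟩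
  | @head a c hac _ ih =>
    obtain ⟨l, hchain, hlast, hnodup⟩ := ih
    by_cases ha : a ∈ c :: l
    · -- cut the path at the earlier visit of `a`
      obtain ⟨s, t, hst⟩ := append_of_mem ha
      have hsuffix : a :: t <:+ c :: l := ⟨s, hst.symm⟩
      refine ⟨t, hchain.suffix hsuffix, ?_, hnodup.sublist hsuffix.sublist⟩
      rw [← hlast]
      simp only [hst, getLast_append_of_ne_nil _ (cons_ne_nil a t)]
    · exact ⟨c :: l, .cons_cons hac hchain, by rwa [getLast_cons_cons],
        nodup_cons.2 ⟨ha, hnodup⟩⟩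

end List

theorem Relation.exists_reflTransGen_transGen_self {α : Type*} [Finite α] {r : α → α → Prop}
    (h : ∀ x, ∃ y, r x y) (a : α) : ∃ c, ReflTransGen r a c ∧ TransGen r c c := by
  choose f hf using h
  have hiter : ∀ n x, ReflTransGen r x (f^[n] x) := by
    intro n
    induction n with
    | zero => exact fun _ => .refl
    | succ n ih => exact fun x => (ih x).tail (by rw [Function.iterate_succ_apply']; exact hf _)
  obtain ⟨i, j, hij, heq⟩ : ∃ i j, i < j ∧ f^[i] a = f^[j] a := by
    obtain ⟨i, j, hne, heq⟩ := Finite.exists_ne_map_eq_of_infinite (f^[·] a)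
    rcases hne.lt_or_gt with hlt | hlt
    exacts [⟨i, j, hlt, heq⟩, ⟨j, i, hlt, heq.symm⟩]
  obtain ⟨d, rfl⟩ := Nat.exists_eq_add_of_lt hij
  have hperiod : f^[d] (f (f^[i] a)) = f^[i] a := by
    rw [← Function.iterate_succ_apply, ← Function.iterate_add_apply, heq]
    congr 1
    omega
  have hreturn := hiter d (f (f^[i] a))
  rw [hperiod] at hreturn
  exact ⟨_, hiter i a, .head' (hf _) hreturn⟩

theorem Set.Finite.exists_reflTransGen_transGen_self {α : Type*} {r : α → α → Prop}
    {s : Set α} (hs : s.Finite) (h : ∀ x ∈ s, ∃ y ∈ s, r x y) {a : α} (ha : a ∈ s) :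
    ∃ c, ReflTransGen r a c ∧ TransGen r c c := by
  have := hs.to_subtype
  obtain ⟨c, hac, hcc⟩ := Relation.exists_reflTransGen_transGen_self (r := fun x y : s => r x y)
    (fun x => let ⟨y, hy, hxy⟩ := h x x.2; ⟨⟨y, hy⟩, hxy⟩) ⟨a, ha⟩
  exact ⟨c, hac.lift _ fun _ _ => id, hcc.lift _ fun _ _ => id⟩

section CycleVertices

variable {V : Type*} {E : V → V → Prop}

theorem IsSimpleCycle.reflTransGen {c : List V} (hc : IsSimpleCycle E c) {a b : V}
    (ha : a ∈ c) (hb : b ∈ c) : ReflTransGen E a b := by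
  obtain ⟨-, -, hchain, hclose⟩ := hc
  have hne : c ≠ [] := List.ne_nil_of_mem ha
  have to_last : ReflTransGen E a (c.getLast hne) :=
    List.IsChain.backwards_induction (ReflTransGen E · _) c hchain (fun _ _ => .head)
      (fun _ => .refl) a ha
  have from_head : ReflTransGen E (c.head hne) b :=
    List.IsChain.induction (ReflTransGen E _ ·) c hchain (fun _ _ h h' => h'.tail h)
      (fun _ => .refl) b hb
  exact to_last.trans (.head (hclose hne) from_head)

theorem isCycleVertex_of_transGen_self (hsimple : SimpleOriented E) {t : V}
    (h : TransGen E t t) : IsCycleVertex E t := by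
  obtain ⟨y, hty, hyt⟩ := TransGen.head'_iff.1 h
  obtain ⟨l, hchain, hlast, hnodup⟩ := List.exists_nodup_isChain_cons_of_reflTransGen hyt
  -- the path `y → ⋯ → t` together with the edge `t → y` is the cycle
  refine ⟨y :: l, ⟨?_, hnodup, hchain, fun _ => hlast ▸ hty⟩,
    hlast ▸ List.getLast_mem _⟩
  match l, hchain, hlast with
  | [], _, hlast =>
    obtain rfl : y = t := hlast
    exact absurd hty (hsimple y y hty)
  | [_], hchain, hlast =>
    obtain rfl : _ = t := hlast
    exact absurd (List.isChain_pair.1 hchain) (hsimple _ y hty)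
  | _ :: _ :: _, _, _ => simp

theorem IsCycleVertex.reflTransGen_of_not_twoCyclesConnected
    (hnc : ¬ TwoCyclesConnected E) {a b : V} (ha : IsCycleVertex E a) (hb : IsCycleVertex E b)
    (hab : ReflTransGen E a b) :
    ReflTransGen E b a := by
  obtain ⟨C, hC, haC⟩ := ha
  obtain ⟨C', hC', hbC'⟩ := hb
  have hrot : C.IsRotated C' := by
    by_contra hrot
    exact hnc ⟨C, C', hC, hC', hrot, a, haC, b, hbC', hab⟩
  exact hC'.reflTransGen hbC' (hrot.mem_iff.1 haC)

end CycleVertices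

section ReducedWords

variable {V : Type*} {E : V → V → Prop} {lt : V → V → Prop}

theorem wpow_two (w : List V) : wpow w 2 = w ++ w := by
  simp [wpow]

theorem exists_adj_mem_of_reduced {p u q : List V} {t : V}
    (hred : Reduced E lt (p ++ [t] ++ u ++ [t] ++ q)) :
    (∃ x ∈ u, E x t) ∧ ∃ y ∈ u, E t y := by
  obtain ⟨u', r, hsplit, htu'⟩ := 
    List.exists_eq_append_cons_notMem (List.mem_concat_self : t ∈ u ++ [t])
  have hsub : ∀ x ∈ u', x ∈ u := fun x hx => by
    have : x ∈ u ++ [t] := hsplit ▸ List.mem_append_left _ hx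
    simpa [ne_of_mem_of_not_mem hx htu'] using this
  have hword : p ++ [t] ++ u ++ [t] ++ q = p ++ [t] ++ u' ++ [t] ++ (r ++ q) := by
    rw [List.append_assoc _ u, List.append_assoc _ (u ++ [t]), hsplit]
    simp
  obtain ⟨hto, hfrom, -⟩ := hred
  rw [hword] at hto hfrom
  constructor
  · by_contra! hno
    exact hto ⟨p, u', r ++ q, t, rfl, htu', fun x hx => hno x (hsub x hx)⟩
  · by_contra! hno
    exact hfrom ⟨p, u', r ++ q, t, rfl, htu', fun y hy => hno y (hsub y hy)⟩

theorem exists_adj_mem_of_reduced_append_self {w : List V} (hred : Reduced E lt (w ++ w))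
    {t : V} (ht : t ∈ w) : (∃ x ∈ w, E x t) ∧ ∃ y ∈ w, E t y := by
  obtain ⟨p, q, rfl⟩ := List.append_of_mem ht
  have hword : (p ++ t :: q) ++ (p ++ t :: q) = p ++ [t] ++ (q ++ p) ++ [t] ++ q := by simp
  have hsub : ∀ x ∈ q ++ p, x ∈ p ++ t :: q := by
    intro x hx
    simp only [List.mem_append, List.mem_cons] at hx ⊢
    tauto
  obtain ⟨⟨x, hx, hxt⟩, ⟨y, hy, hty⟩⟩ := exists_adj_mem_of_reduced (hword ▸ hred)
  exact ⟨⟨x, hsub x hx, hxt⟩, ⟨y, hsub y hy, hty⟩⟩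

end ReducedWords

theorem power_reduced_word_support_cyclic_general
    {V : Type*} [LinearOrder V] (E : V → V → Prop)
    (hsimple : SimpleOriented E)
    (hnc : ¬ TwoCyclesConnected E)
    (w : List V)
    (hred : ∀ m : ℕ, 1 ≤ m → Reduced E (· < ·) (wpow w m)) :
    ∀ x ∈ w, IsCycleVertex E x := by
  intro t ht
  have hsq : Reduced E (· < ·) (w ++ w) := wpow_two w ▸ hred 2 one_le_two
  have hadj := fun x (hx : x ∈ w) => exists_adj_mem_of_reduced_append_self hsq hx
  obtain ⟨c, htc, hc⟩ :=
    w.finite_toSet.exists_reflTransGen_transGen_self (fun x hx => (hadj x hx).2) ht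
  obtain ⟨c', htc', hc'⟩ :=
    w.finite_toSet.exists_reflTransGen_transGen_self (r := flip E) (fun x hx => (hadj x hx).1) ht
  have hc't : ReflTransGen E c' t := reflTransGen_swap.1 htc'
  have hc_cycle := isCycleVertex_of_transGen_self hsimple hc
  have hc'_cycle := isCycleVertex_of_transGen_self hsimple (transGen_swap.1 hc')
  have hcc' : ReflTransGen E c c' :=
    hc'_cycle.reflTransGen_of_not_twoCyclesConnected hnc hc_cycle (hc't.trans htc)
  exact isCycleVertex_of_transGen_self hsimple
    ((TransGen.trans_right htc hc).trans_left (hcc'.trans hc't))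

/-- If `Θ` has no two distinct simple cycles connected by an oriented path and
`w ≠ 1` is a word such that `w^m` is reduced for every `m ≥ 1`, then every letter of `w` is a
cycle vertex. -/
theorem power_reduced_word_support_cyclic
    {V : Type*} [Fintype V] [LinearOrder V] (E : V → V → Prop)
    (hsimple : SimpleOriented E)
    (hnc : ¬ TwoCyclesConnected E)
    (w : List V) (hw : w ≠ [])
    (hred : ∀ m : ℕ, 1 ≤ m → Reduced E (· < ·) (wpow w m)) :
    ∀ x ∈ w, IsCycleVertex E x :=
  power_reduced_word_support_cyclic_general E hsimple hnc w hred
end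

section
/- Let Θ be a finite simple oriented graph containing no two distinct simple cycles connected by an oriented path of length ≥ 0, with simple cycles C₁, …, C_k. Fix a linear order on V such that, writing C_l : x_{1,l} → ⋯ → x_{n_l,l} → x_{1,l}, for cycle vertices one has x_{p,r} < x_{q,s} if and only if r < s, or r = s and p < q. If w ∈ V* is a reduced word all of whose letters are cycle vertices, then w = w₁w₂⋯w_q for some words w₁, …, w_q ∈ V* and indices i₁ < i₂ < ⋯ < i_q such that supp(w_p) ⊆ V(C_{i_p}) for p = 1, …, q. -/
open Relation

/-!
Label every letter of `w` with the index of its cycle. If adjacent letters `x y` carried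
indices `i > j`, then `y < x` by the choice of the order, and `x`, `y` are not joined by an
edge, since an edge is a path between two distinct cycles; so `x y` would be a forbidden factor
of type (iii) with `u` empty. Hence the index never decreases along `w`, and the maximal blocks
of constant index form the required factorization.
-/

namespace List

variable {α β : Type*} [PartialOrder β] (f : α → β)

/-- The `head?` clause is the invariant that makes the induction go through. -/
theorem exists_blocks_of_isChain_le :
    ∀ {w : List α}, w.IsChain (f · ≤ f ·) → ∃ L : List (List α × β),
      (L.map Prod.snd).IsChain (· < ·) ∧ (L.map Prod.fst).flatten = w ∧
      (∀ b ∈ L, ∀ x ∈ b.1, f x = b.2) ∧ (L.map Prod.snd).head? = w.head?.map f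
  | [], _ => ⟨[], .nil, rfl, by simp, rfl⟩
  | x :: w, hw => by
    obtain ⟨hxw, hw⟩ := isChain_cons.mp hw
    obtain ⟨L, hL, hLw, hLf, hhead⟩ := exists_blocks_of_isChain_le hw
    rcases L with _ | ⟨⟨b, v⟩, L⟩
    · exact ⟨[([x], f x)], .singleton _, by simp [← hLw], by simp, rfl⟩
    · obtain ⟨y, hy, rfl⟩ := Option.map_eq_some_iff.mp hhead.symm
      rcases (hxw y hy).lt_or_eq with hlt | heq
      · exact ⟨([x], f x) :: (b, f y) :: L, hL.cons_cons hlt, by simp [← hLw],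
          by simpa using hLf, rfl⟩
      · exact ⟨(x :: b, f x) :: L, by simpa [heq] using hL, by simp [← hLw],
          by simpa [heq] using hLf, rfl⟩

theorem exists_strictMono_blocks_of_isChain_le {w : List α} (hw : w.IsChain (f · ≤ f ·)) :
    ∃ (q : ℕ) (ws : Fin q → List α) (idx : Fin q → β),
      StrictMono idx ∧ w = (ofFn ws).flatten ∧ ∀ p, ∀ x ∈ ws p, f x = idx p := by
  obtain ⟨L, hL, hLw, hLf, -⟩ := exists_blocks_of_isChain_le f hw
  refine ⟨L.length, fun p => L[(p : ℕ)].1, fun p => L[(p : ℕ)].2, ?_, ?_,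
    fun p => hLf _ (getElem_mem _)⟩
  · rw [← sortedLT_ofFn_iff, ofFn_getElem_eq_map L Prod.snd]
    exact hL.sortedLT
  · rw [ofFn_getElem_eq_map L Prod.fst, hLw]

end List

section Cycles

variable {V ι : Type*} {E : V → V → Prop} {cycles : ι → List V}

theorem not_adj_of_mem_of_mem_of_ne (hnc : ¬ TwoCyclesConnected E)
    (hcyc : ∀ j, IsSimpleCycle E (cycles j))
    (hdist : ∀ i j, i ≠ j → ¬ (cycles i).IsRotated (cycles j))
    {i j : ι} (hij : i ≠ j) {x y : V} (hx : x ∈ cycles i) (hy : y ∈ cycles j) :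
    ¬ E x y := fun hxy =>
  hnc ⟨_, _, hcyc i, hcyc j, hdist i j hij, x, hx, y, hy, .single hxy⟩

theorem lt_of_mem_of_mem_of_lt [LT ι] [LT V]
    (horder : ∀ (r s : ι) (p : Fin (cycles r).length) (q : Fin (cycles s).length),
      (cycles r).get p < (cycles s).get q ↔ (r < s ∨ (r = s ∧ (p : ℕ) < (q : ℕ))))
    {i j : ι} (hij : i < j) {x y : V} (hx : x ∈ cycles i) (hy : y ∈ cycles j) : x < y := by
  obtain ⟨p, rfl⟩ := List.get_of_mem hx
  obtain ⟨q, rfl⟩ := List.get_of_mem hy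
  exact (horder i j p q).mpr (.inl hij)

theorem Reduced.adj_of_infix_of_lt [Preorder V] {w : List V} (hred : Reduced E (· < ·) w)
    {x y : V} (hxy : [x, y] <:+: w) (hyx : y < x) : E x y ∨ E y x := by
  obtain ⟨p, q, rfl⟩ := hxy
  by_contra! h
  exact hred.2.2 ⟨p, [], q, x, y, by simp, hyx, by simp [NConn, NArrowTo, NArrowFrom, hyx.ne, h]⟩

theorem Reduced.isChain_le_of_mem [LinearOrder ι] [Preorder V] {w : List V}
    (hred : Reduced E (· < ·) w)
    (hE : ∀ {i j : ι}, i ≠ j → ∀ {x y : V}, x ∈ cycles i → y ∈ cycles j → ¬ E x y)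
    (hlt : ∀ {i j : ι}, i < j → ∀ {x y : V}, x ∈ cycles i → y ∈ cycles j → x < y)
    {f : V → ι} (hf : ∀ x ∈ w, x ∈ cycles (f x)) : w.IsChain (f · ≤ f ·) := by
  refine (List.isChain_isInfix w).imp fun x y hxy => le_of_not_gt fun hyx => ?_
  have hx := hf x (hxy.subset (by simp))
  have hy := hf y (hxy.subset (by simp))
  rcases hred.adj_of_infix_of_lt hxy (hlt hyx hy hx) with h | h
  · exact hE hyx.ne' hx hy h
  · exact hE hyx.ne hy hx h

end Cycles

theorem reduced_cyclic_word_factors_by_cycles_general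
    {V : Type*} [LinearOrder V] (E : V → V → Prop)
    (hnc : ¬ TwoCyclesConnected E)
    {k : ℕ} (cycles : Fin k → List V)
    (hcyc : ∀ j, IsSimpleCycle E (cycles j))
    (hdist : ∀ i j, i ≠ j → ¬ (cycles i).IsRotated (cycles j))
    (hcomp : ∀ c, IsSimpleCycle E c → ∃ j, c.IsRotated (cycles j))
    (horder : ∀ (r s : Fin k) (p : Fin (cycles r).length) (q : Fin (cycles s).length),
      (cycles r).get p < (cycles s).get q ↔ (r < s ∨ (r = s ∧ (p : ℕ) < (q : ℕ))))
    (w : List V) (hred : Reduced E (· < ·) w)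
    (hcw : ∀ x ∈ w, IsCycleVertex E x) :
    ∃ (q : ℕ) (ws : Fin q → List V) (idx : Fin q → Fin k),
      StrictMono idx ∧ w = (List.ofFn ws).flatten ∧
      ∀ p : Fin q, ∀ x ∈ ws p, x ∈ cycles (idx p) := by
  rcases eq_or_ne w [] with rfl | hw
  · exact ⟨0, Fin.elim0, Fin.elim0, fun a => a.elim0, rfl, fun p => p.elim0⟩
  obtain ⟨x₀, hx₀⟩ := w.exists_mem_of_ne_nil hw
  have hmem : ∀ x ∈ w, ∃ j, x ∈ cycles j := fun x hx => by
    obtain ⟨c, hc, hxc⟩ := hcw x hx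
    obtain ⟨j, hj⟩ := hcomp c hc
    exact ⟨j, hj.mem_iff.mp hxc⟩
  have : Nonempty (Fin k) := ⟨(hmem x₀ hx₀).choose⟩
  choose! f hf using hmem
  obtain ⟨q, ws, idx, hidx, rfl, hws⟩ := List.exists_strictMono_blocks_of_isChain_le f
    (hred.isChain_le_of_mem (not_adj_of_mem_of_mem_of_ne hnc hcyc hdist)
      (lt_of_mem_of_mem_of_lt horder) hf)
  refine ⟨q, ws, idx, hidx, rfl, fun p x hx => hws p x hx ▸ hf x ?_⟩
  exact List.mem_flatten.mpr ⟨ws p, List.mem_ofFn.mpr ⟨p, rfl⟩, hx⟩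

/-- With an order on `V` compatible with the enumeration of the cycles, every
reduced word all of whose letters are cycle vertices factors as `w = w₁ ⋯ w_q` with
`supp(w_p) ⊆ V(C_{i_p})` for strictly increasing indices `i₁ < ⋯ < i_q`. -/
theorem reduced_cyclic_word_factors_by_cycles
    {V : Type*} [Fintype V] [LinearOrder V] (E : V → V → Prop)
    (hsimple : SimpleOriented E)
    (hnc : ¬ TwoCyclesConnected E)
    {k : ℕ} (cycles : Fin k → List V)
    (hcyc : ∀ j, IsSimpleCycle E (cycles j))
    (hdist : ∀ i j, i ≠ j → ¬ (cycles i).IsRotated (cycles j))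
    (hcomp : ∀ c, IsSimpleCycle E c → ∃ j, c.IsRotated (cycles j))
    (horder : ∀ (r s : Fin k) (p : Fin (cycles r).length) (q : Fin (cycles s).length),
      (cycles r).get p < (cycles s).get q ↔ (r < s ∨ (r = s ∧ (p : ℕ) < (q : ℕ))))
    (w : List V) (hred : Reduced E (· < ·) w)
    (hcw : ∀ x ∈ w, IsCycleVertex E x) :
    ∃ (q : ℕ) (ws : Fin q → List V) (idx : Fin q → Fin k),
      StrictMono idx ∧ w = (List.ofFn ws).flatten ∧
      ∀ p : Fin q, ∀ x ∈ ws p, x ∈ cycles (idx p) :=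
  reduced_cyclic_word_factors_by_cycles_general E hnc cycles hcyc hdist hcomp horder w hred hcw
end
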